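/- arXiv:2605.30754 — 2 statements merged into one kernel-verified Lean document; each statement's English description precedes it below -/
import Mathlib

section
/- Let a_0, a_1, a_2 ∈ ℤ² be such that |det(a_0 - a_1, a_0 - a_2)| = 3 and each of the vectors a_0 - a_1, a_0 - a_2, a_1 - a_2 has coprime coordinates. Then b = (a_0 + a_1 + a_2)/3 is a lattice point lying in the relative interior of the triangle conv(a_0, a_1, a_2), and the only lattice points in this triangle are a_0, a_1, a_2, and b. -/
/-!
Put `u = a₀ - a₁`, `v = a₀ - a₂`. Modulo 3 the vanishing of `det(u, v)` makes `ū` and `v̄` parallel,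
and primitivity makes `ū`, `v̄`, `v̄ - ū` nonzero, so `v̄ = -ū`: `3 ∣ u + v`, i.e.
`3 ∣ a₀ + a₁ + a₂`. A point `z` of the triangle satisfies `a₀ - z = s u + t v` with `s, t ≥ 0`,
`s + t ≤ 1`; orienting so that `det(u, v) = 3`, Cramer's rule makes `m = 3s`, `n = 3t` integers with
`3 (a₀ - z) = m u + n v` when `z` is a lattice point. Reducing mod 3 gives `(m - n) ū = 0`, so
`m ≡ n (mod 3)`, which leaves `(m, n) ∈ {(0,0), (3,0), (0,3), (1,1)}`: the three vertices and the
centroid, which lies in the interior because all its barycentric coordinates are positive.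
-/

open Set

def toR (x : Fin 2 → ℤ) : Fin 2 → ℝ := fun i => (x i : ℝ)

/-- Determinant of the 2×2 matrix with columns `u, v ∈ ℤ²`. -/
def det2 (u v : Fin 2 → ℤ) : ℤ := u 0 * v 1 - u 1 * v 0

section Triangle

variable {k V : Type*} [Field k] [AddCommGroup V] [Module k V]

theorem AffineIndependent.of_linearIndependent_sub {p q r : V}
    (h : LinearIndependent k ![p - q, p - r]) : AffineIndependent k ![p, q, r] := by
  rw [affineIndependent_iff_of_fintype]
  intro w hw hw0
  rw [Finset.weightedVSub_eq_linear_combination _ hw] at hw0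
  simp only [Fin.sum_univ_three, Matrix.cons_val_zero, Matrix.cons_val_one, Matrix.cons_val]
    at hw hw0
  obtain ⟨h1, h2⟩ := LinearIndependent.pair_iff.1 h (-w 1) (-w 2) (by
    linear_combination (norm := module) hw0 - hw • p)
  intro i
  fin_cases i <;> simp_all

noncomputable def AffineBasis.ofLinearIndependentSub [FiniteDimensional k V]
    (hV : Module.finrank k V = 2) {p q r : V} (h : LinearIndependent k ![p - q, p - r]) :
    AffineBasis (Fin 3) k V where
  toFun := ![p, q, r]
  ind' := .of_linearIndependent_sub h
  tot' :=
    (AffineIndependent.of_linearIndependent_sub h).affineSpan_eq_top_iff_card_eq_finrank_add_one.2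
      (by simp [hV])

theorem AffineBasis.range_ofLinearIndependentSub [FiniteDimensional k V]
    (hV : Module.finrank k V = 2) {p q r : V} (h : LinearIndependent k ![p - q, p - r]) :
    range (AffineBasis.ofLinearIndependentSub hV h) = {p, q, r} := by
  change range ![p, q, r] = _
  rw [Matrix.range_cons, Matrix.range_cons_cons_empty, singleton_union]

theorem AffineBasis.exists_sub_eq_of_mem_convexHull [LinearOrder k] [IsStrictOrderedRing k]
    (B : AffineBasis (Fin 3) k V) {x : V} (hx : x ∈ convexHull k (range B)) :
    ∃ s t : k, 0 ≤ s ∧ 0 ≤ t ∧ s + t ≤ 1 ∧ B 0 - x = s • (B 0 - B 1) + t • (B 0 - B 2) := by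
  rw [B.convexHull_eq_nonneg_coord] at hx
  have hsum := B.sum_coord_apply_eq_one x
  have hx' := B.linear_combination_coord_eq_self x
  rw [Fin.sum_univ_three] at hsum hx'
  refine ⟨B.coord 1 x, B.coord 2 x, hx 1, hx 2, by linarith [hx 0], ?_⟩
  linear_combination (norm := module) hx' - hsum • B 0

theorem exists_sub_eq_of_mem_convexHull_of_linearIndependent_sub [LinearOrder k]
    [IsStrictOrderedRing k] [FiniteDimensional k V] (hV : Module.finrank k V = 2) {p q r x : V}
    (h : LinearIndependent k ![p - q, p - r]) (hx : x ∈ convexHull k {p, q, r}) :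
    ∃ s t : k, 0 ≤ s ∧ 0 ≤ t ∧ s + t ≤ 1 ∧ p - x = s • (p - q) + t • (p - r) := by
  rw [← AffineBasis.range_ofLinearIndependentSub hV h] at hx
  exact (AffineBasis.ofLinearIndependentSub hV h).exists_sub_eq_of_mem_convexHull hx

theorem Finset.univ_centroid_fin_three [CharZero k] (p q r : V) :
    Finset.univ.centroid k ![p, q, r] = (3 : k)⁻¹ • (p + q + r) := by
  rw [Finset.centroid_def, Finset.affineCombination_eq_linear_combination]
  · simp [Fin.sum_univ_three, smul_add]
  · simp

end Triangle

theorem inv_three_smul_add_add_mem_interior_convexHull {V : Type*} [NormedAddCommGroup V]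
    [NormedSpace ℝ V] [FiniteDimensional ℝ V] (hV : Module.finrank ℝ V = 2) {p q r : V}
    (h : LinearIndependent ℝ ![p - q, p - r]) :
    (3 : ℝ)⁻¹ • (p + q + r) ∈ interior (convexHull ℝ {p, q, r}) := by
  rw [← AffineBasis.range_ofLinearIndependentSub hV h, ← Finset.univ_centroid_fin_three]
  exact (AffineBasis.ofLinearIndependentSub hV h).centroid_mem_interior_convexHull

theorem toR_sub (x y : Fin 2 → ℤ) : toR (x - y) = toR x - toR y := by
  ext i
  simp [toR]

theorem det2_smul_eq_add (u v w : Fin 2 → ℤ) : det2 u v • w = det2 w v • u + det2 u w • v := by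
  ext i
  fin_cases i <;> simp [det2] <;> ring

theorem det2_eq_of_toR_eq {u v w : Fin 2 → ℤ} {s t : ℝ} (h : toR w = s • toR u + t • toR v) :
    (det2 w v : ℝ) = s * det2 u v ∧ (det2 u w : ℝ) = t * det2 u v := by
  have h0 := congrFun h 0
  have h1 := congrFun h 1
  simp only [toR, Pi.add_apply, Pi.smul_apply, smul_eq_mul] at h0 h1
  simp only [det2]
  push_cast
  constructor
  · linear_combination (v 1 : ℝ) * h0 - (v 0 : ℝ) * h1
  · linear_combination (u 0 : ℝ) * h1 - (u 1 : ℝ) * h0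

theorem linearIndependent_toR_of_det2_ne_zero {u v : Fin 2 → ℤ} (h : det2 u v ≠ 0) :
    LinearIndependent ℝ ![toR u, toR v] := by
  refine LinearIndependent.pair_iff.2 fun s t hst => ?_
  obtain ⟨hs, ht⟩ := det2_eq_of_toR_eq (u := u) (v := v) (w := 0) (by rw [hst]; ext i; simp [toR])
  have hD : (det2 u v : ℝ) ≠ 0 := by exact_mod_cast h
  rw [show det2 0 v = 0 by simp [det2], Int.cast_zero, zero_eq_mul] at hs
  rw [show det2 u 0 = 0 by simp [det2], Int.cast_zero, zero_eq_mul] at ht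
  exact ⟨hs.resolve_right hD, ht.resolve_right hD⟩

theorem not_three_dvd_and_of_gcd_eq_one {x y : ℤ} (h : Int.gcd x y = 1) : ¬(3 ∣ x ∧ 3 ∣ y) :=
  fun ⟨hx, hy⟩ => by
    simpa [Int.isUnit_iff] using (Int.isCoprime_iff_gcd_eq_one.2 h).isUnit_of_dvd' hx hy

theorem zmod3_add_eq_zero_of_det_eq_zero (u0 u1 v0 v1 : ZMod 3)
    (hdet : u0 * v1 - u1 * v0 = 0) (hu : ¬(u0 = 0 ∧ u1 = 0)) (hv : ¬(v0 = 0 ∧ v1 = 0))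
    (huv : ¬(v0 - u0 = 0 ∧ v1 - u1 = 0)) : u0 + v0 = 0 ∧ u1 + v1 = 0 := by
  revert u0 u1 v0 v1
  decide

theorem three_dvd_add_of_three_dvd_det2 {u v : Fin 2 → ℤ} (hdet : 3 ∣ det2 u v)
    (hu : Int.gcd (u 0) (u 1) = 1) (hv : Int.gcd (v 0) (v 1) = 1)
    (huv : Int.gcd (v 0 - u 0) (v 1 - u 1) = 1) (i : Fin 2) : 3 ∣ u i + v i := by
  have hcast (x : ℤ) : (x : ZMod 3) = 0 ↔ 3 ∣ x := by
    simpa using ZMod.intCast_zmod_eq_zero_iff_dvd x 3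
  have key := zmod3_add_eq_zero_of_det_eq_zero (u 0) (u 1) (v 0) (v 1)
    (by simpa [det2] using (hcast _).2 hdet)
    (by simpa [hcast] using not_three_dvd_and_of_gcd_eq_one hu)
    (by simpa [hcast] using not_three_dvd_and_of_gcd_eq_one hv)
    (by simpa [← Int.cast_sub, hcast] using not_three_dvd_and_of_gcd_eq_one huv)
  rw [← hcast]
  push_cast
  fin_cases i
  exacts [key.1, key.2]

theorem lattice_point_cases_of_det2_eq_three {u v w : Fin 2 → ℤ} (hD : det2 u v = 3)
    (hu : Int.gcd (u 0) (u 1) = 1) (hsum : ∀ i, 3 ∣ u i + v i) {s t : ℝ} (hs : 0 ≤ s)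
    (ht : 0 ≤ t) (hst : s + t ≤ 1) (hw : toR w = s • toR u + t • toR v) :
    w = 0 ∨ w = u ∨ w = v ∨ 3 • w = u + v := by
  obtain ⟨hm, hn⟩ := det2_eq_of_toR_eq hw
  have hcramer := det2_smul_eq_add u v w
  set m := det2 w v
  set n := det2 u w
  rw [hD] at hm hn hcramer
  have hm0 : 0 ≤ m := by exact_mod_cast (show (0 : ℝ) ≤ m by rw [hm]; positivity)
  have hn0 : 0 ≤ n := by exact_mod_cast (show (0 : ℝ) ≤ n by rw [hn]; positivity)
  have hmn : m + n ≤ 3 := by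
    exact_mod_cast (show (m + n : ℝ) ≤ 3 by rw [hm, hn]; push_cast; linarith)
  have hcoord (i : Fin 2) : 3 * w i = m * u i + n * v i := by simpa using congrFun hcramer i
  have hmod : 3 ∣ m - n := by
    have hdvd (i : Fin 2) : 3 ∣ (m - n) * u i := by
      obtain ⟨c, hc⟩ := hsum i
      exact ⟨w i - n * c, by linear_combination -hcoord i - n * hc⟩
    by_contra h
    exact not_three_dvd_and_of_gcd_eq_one hu
      ⟨(Int.prime_three.dvd_or_dvd (hdvd 0)).resolve_left h,
        (Int.prime_three.dvd_or_dvd (hdvd 1)).resolve_left h⟩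
  have h0 := hcoord 0
  have h1 := hcoord 1
  have hcases : (m = 0 ∧ n = 0) ∨ (m = 3 ∧ n = 0) ∨ (m = 0 ∧ n = 3) ∨ (m = 1 ∧ n = 1) := by
    omega
  rcases hcases with ⟨hm, hn⟩ | ⟨hm, hn⟩ | ⟨hm, hn⟩ | ⟨hm, hn⟩ <;> rw [hm, hn] at h0 h1
  · left; ext i; fin_cases i <;> simp <;> omega
  · right; left; ext i; fin_cases i <;> simp <;> omega
  · right; right; left; ext i; fin_cases i <;> simp <;> omega
  · right; right; right; ext i; fin_cases i <;> simp <;> omega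

theorem lattice_point_cases_of_natAbs_det2_eq_three {u v w : Fin 2 → ℤ}
    (hD : (det2 u v).natAbs = 3) (hu : Int.gcd (u 0) (u 1) = 1) (hv : Int.gcd (v 0) (v 1) = 1)
    (hsum : ∀ i, 3 ∣ u i + v i) {s t : ℝ} (hs : 0 ≤ s) (ht : 0 ≤ t) (hst : s + t ≤ 1)
    (hw : toR w = s • toR u + t • toR v) :
    w = 0 ∨ w = u ∨ w = v ∨ 3 • w = u + v := by
  rcases Int.natAbs_eq_iff.1 hD with hD | hD
  · exact lattice_point_cases_of_det2_eq_three hD hu hsum hs ht hst hw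
  · have hD' : det2 v u = 3 := by
      simp only [det2] at hD ⊢
      push_cast at hD
      linear_combination -hD
    rcases lattice_point_cases_of_det2_eq_three hD' hv (fun i => add_comm (u i) (v i) ▸ hsum i)
      ht hs (by linarith) (by rw [hw, add_comm]) with h | h | h | h
    · exact Or.inl h
    · exact Or.inr (Or.inr (Or.inl h))
    · exact Or.inr (Or.inl h)
    · exact Or.inr (Or.inr (Or.inr (h.trans (add_comm v u))))

theorem exists_add_add_eq_three_smul {a0 a1 a2 : Fin 2 → ℤ}
    (h : ∀ i, 3 ∣ (a0 - a1) i + (a0 - a2) i) : ∃ b : Fin 2 → ℤ, a0 + a1 + a2 = 3 • b := by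
  refine ⟨fun i => (a0 i + a1 i + a2 i) / 3, funext fun i => ?_⟩
  have := h i
  simp only [Pi.add_apply, Pi.sub_apply, Pi.smul_apply, nsmul_eq_mul] at this ⊢
  omega

theorem eq_of_three_smul_sub_eq {a0 a1 a2 b z : Fin 2 → ℤ}
    (h : 3 • (a0 - z) = a0 - a1 + (a0 - a2)) (hb : a0 + a1 + a2 = 3 • b) : z = b := by
  ext i
  have h1 := congrFun h i
  have h2 := congrFun hb i
  simp only [Pi.smul_apply, Pi.sub_apply, Pi.add_apply, nsmul_eq_mul] at h1 h2
  omega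

theorem toR_eq_inv_three_smul_of_add_add_eq {a0 a1 a2 b : Fin 2 → ℤ}
    (hb : a0 + a1 + a2 = 3 • b) : toR b = (3 : ℝ)⁻¹ • (toR a0 + toR a1 + toR a2) := by
  ext i
  have h : (a0 i + a1 i + a2 i : ℝ) = 3 * b i := by exact_mod_cast by simpa using congrFun hb i
  simp only [toR, Pi.smul_apply, Pi.add_apply, smul_eq_mul, h]
  ring

/-- If `|det(a₀-a₁, a₀-a₂)| = 3` and each pairwise difference of `a₀,a₁,a₂ ∈ ℤ²`
has coprime coordinates, then `b = (a₀+a₁+a₂)/3` is a lattice point in the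
relative interior of the triangle, and the only lattice points in the triangle
are `a₀, a₁, a₂, b`. -/
theorem almost_empty_triangle (a0 a1 a2 : Fin 2 → ℤ)
    (hdet : (det2 (a0 - a1) (a0 - a2)).natAbs = 3)
    (h01 : Int.gcd (a0 0 - a1 0) (a0 1 - a1 1) = 1)
    (h02 : Int.gcd (a0 0 - a2 0) (a0 1 - a2 1) = 1)
    (h12 : Int.gcd (a1 0 - a2 0) (a1 1 - a2 1) = 1) :
    ∃ b : Fin 2 → ℤ, a0 + a1 + a2 = 3 • b ∧
      toR b ∈ intrinsicInterior ℝ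
        (convexHull ℝ ({toR a0, toR a1, toR a2} : Set (Fin 2 → ℝ))) ∧
      ∀ z : Fin 2 → ℤ,
        toR z ∈ convexHull ℝ ({toR a0, toR a1, toR a2} : Set (Fin 2 → ℝ)) ↔
          (z = a0 ∨ z = a1 ∨ z = a2 ∨ z = b) := by
  have hsum := three_dvd_add_of_three_dvd_det2 (u := a0 - a1) (v := a0 - a2)
    (Int.ofNat_dvd_left.2 (by rw [hdet])) h01 h02 (by simpa using h12)
  obtain ⟨b, hb⟩ := exists_add_add_eq_three_smul hsum
  have hind : LinearIndependent ℝ ![toR a0 - toR a1, toR a0 - toR a2] := by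
    have hD : det2 (a0 - a1) (a0 - a2) ≠ 0 := by omega
    simpa [toR_sub] using linearIndependent_toR_of_det2_ne_zero hD
  have hbint : toR b ∈ interior (convexHull ℝ {toR a0, toR a1, toR a2}) := by
    rw [toR_eq_inv_three_smul_of_add_add_eq hb]
    exact inv_three_smul_add_add_mem_interior_convexHull (by simp) hind
  refine ⟨b, hb, interior_subset_intrinsicInterior hbint, fun z => ⟨fun hz => ?_, ?_⟩⟩
  · obtain ⟨s, t, hs, ht, hst, hsub⟩ :=
      exists_sub_eq_of_mem_convexHull_of_linearIndependent_sub (by simp) hind hz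
    rcases lattice_point_cases_of_natAbs_det2_eq_three (w := a0 - z) hdet h01 h02 hsum hs ht hst
      (by simpa [toR_sub] using hsub) with h | h | h | h
    · exact Or.inl (sub_eq_zero.1 h).symm
    · exact Or.inr (Or.inl (sub_right_inj.1 h))
    · exact Or.inr (Or.inr (Or.inl (sub_right_inj.1 h)))
    · exact Or.inr (Or.inr (Or.inr (eq_of_three_smul_sub_eq h hb)))
  · rintro (rfl | rfl | rfl | rfl)
    · exact subset_convexHull ℝ _ (by simp)
    · exact subset_convexHull ℝ _ (by simp)
    · exact subset_convexHull ℝ _ (by simp)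
    · exact interior_subset hbint
end

section
/- Every triangle T = conv(a_0, a_1, a_2) with vertices in ℤ², normalized area 3 (i.e., |det(a_0-a_1, a_0-a_2)| = 3), exactly one interior lattice point, and no lattice points in the relative interiors of its edges, is equivalent under the action of GL_2(ℤ) and lattice translations to the Motzkin configuration with vertices (0,0), (1,2), (2,1) and interior point (1,1). -/
private lemma zmod3_classify : ∀ x0 x1 y0 y1 : ZMod 3,
    x0 * y1 - x1 * y0 = 0 → ¬(x0 = 0 ∧ x1 = 0) → ¬(y0 = 0 ∧ y1 = 0) →
    ¬(x0 = y0 ∧ x1 = y1) → x0 + y0 = 0 ∧ x1 + y1 = 0 := by decide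

private lemma core (u w : Fin 2 → ℤ) (p q : ℤ)
    (h3 : u 0 * w 1 - u 1 * w 0 = 3)
    (hp : u 0 + w 0 = 3 * p) (hq : u 1 + w 1 = 3 * q) :
    ∃ M : Matrix (Fin 2) (Fin 2) ℤ, (M.det = 1 ∨ M.det = -1) ∧
      M.mulVec u = ![1, -1] ∧ M.mulVec w = ![-1, -2] ∧
      M.mulVec ![p, q] = ![0, -1] := by
  have e1 : q * u 0 - p * u 1 = 1 := by
    have h : 3 * (q * u 0 - p * u 1) = 3 * 1 := by
      linear_combination u 1 * hp - u 0 * hq + h3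
    exact mul_left_cancel₀ (by norm_num) h
  have e2 : q * w 0 - p * w 1 = -1 := by
    have h : 3 * (q * w 0 - p * w 1) = 3 * (-1) := by
      linear_combination w 1 * hp - w 0 * hq - h3
    exact mul_left_cancel₀ (by norm_num) h
  have e3 : u 1 * p - u 0 * q = -1 := by
    have h : 3 * (u 1 * p - u 0 * q) = 3 * (-1) := by
      linear_combination u 0 * hq - u 1 * hp - h3
    exact mul_left_cancel₀ (by norm_num) h
  refine ⟨!![q, -p; u 1 - q, p - u 0], Or.inr ?_, ?_, ?_, ?_⟩
  · rw [Matrix.det_fin_two_of]; linear_combination -e1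
  · funext i
    fin_cases i <;>
      simp [Matrix.mulVec, dotProduct, Fin.sum_univ_two]
    · linear_combination e1
    · linear_combination -e1
  · funext i
    fin_cases i <;>
      simp [Matrix.mulVec, dotProduct, Fin.sum_univ_two]
    · linear_combination e2
    · linear_combination -h3 - e2
  · funext i
    fin_cases i <;>
      simp [Matrix.mulVec, dotProduct, Fin.sum_univ_two]
    · ring
    · linear_combination e3

private lemma edge_not_dvd (x y : Fin 2 → ℤ)
    (h : ∀ z : Fin 2 → ℤ, toR z ∉ openSegment ℝ (toR x) (toR y)) :
    ¬ ((3:ℤ) ∣ (y 0 - x 0) ∧ (3:ℤ) ∣ (y 1 - x 1)) := by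
  rintro ⟨⟨k0, hk0⟩, ⟨k1, hk1⟩⟩
  apply h ![x 0 + k0, x 1 + k1]
  refine ⟨2/3, 1/3, by norm_num, by norm_num, by norm_num, ?_⟩
  have c0 : (y 0 : ℝ) - x 0 = 3 * k0 := by exact_mod_cast congrArg (Int.cast : ℤ → ℝ) hk0
  have c1 : (y 1 : ℝ) - x 1 = 3 * k1 := by exact_mod_cast congrArg (Int.cast : ℤ → ℝ) hk1
  funext i
  fin_cases i <;> simp [toR] <;> push_cast <;> linarith

private lemma centroid_intrinsic (a0 a1 a2 c : Fin 2 → ℤ)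
    (hnc : ¬ Collinear ℝ ({toR a0, toR a1, toR a2} : Set (Fin 2 → ℝ)))
    (hc : ∀ i, 3 * c i = a0 i + a1 i + a2 i) :
    toR c ∈ intrinsicInterior ℝ
      (convexHull ℝ ({toR a0, toR a1, toR a2} : Set (Fin 2 → ℝ))) := by
  set v3 : Fin 3 → (Fin 2 → ℝ) := ![toR a0, toR a1, toR a2] with hv3
  have hrange : Set.range v3 = {toR a0, toR a1, toR a2} := by
    ext x
    constructor
    · rintro ⟨i, rfl⟩
      fin_cases i <;> simp [v3]
    · rintro (rfl | rfl | rfl)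
      exacts [⟨0, rfl⟩, ⟨1, rfl⟩, ⟨2, rfl⟩]
  have hAI : AffineIndependent ℝ v3 := by
    rw [affineIndependent_iff_not_collinear, hrange]
    exact hnc
  have htop : affineSpan ℝ (Set.range v3) = ⊤ := by
    rw [hAI.affineSpan_eq_top_iff_card_eq_finrank_add_one]
    simp
  let b : AffineBasis (Fin 3) ℝ (Fin 2 → ℝ) := ⟨v3, hAI, htop⟩
  have hcent := b.centroid_mem_interior_convexHull
  have hb : ⇑b = v3 := rfl
  rw [hb, hrange] at hcent
  have hc_eq : Finset.univ.centroid ℝ v3 = toR c := by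
    rw [Finset.centroid_def,
      Finset.affineCombination_eq_linear_combination _ _ _
        (Finset.sum_centroidWeights_eq_one_of_nonempty ℝ _ Finset.univ_nonempty)]
    simp only [Finset.centroidWeights_apply, Fin.sum_univ_three]
    funext i
    have h3c : ∀ j, ((3 : ℝ)) * (c j : ℝ) = (a0 j : ℝ) + a1 j + a2 j := by
      intro j
      exact_mod_cast congrArg (Int.cast : ℤ → ℝ) (hc j)
    fin_cases i
    · simp [v3, toR, Finset.card_univ]
      linarith [h3c 0]
    · simp [v3, toR, Finset.card_univ]
      linarith [h3c 1]
  rw [hc_eq] at hcent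
  exact interior_subset_intrinsicInterior hcent

/-- Every lattice triangle of normalized area 3 with exactly one interior
lattice point and no lattice points in the relative interiors of its edges is
affinely lattice-equivalent (`GL₂(ℤ)` plus a translation) to the Motzkin
configuration with vertices `(0,0), (1,2), (2,1)` and interior point `(1,1)`. -/
theorem motzkin_configuration (a0 a1 a2 : Fin 2 → ℤ)
    (hdet : (det2 (a0 - a1) (a0 - a2)).natAbs = 3)
    (hint : ∃! b : Fin 2 → ℤ, toR b ∈ intrinsicInterior ℝ
      (convexHull ℝ ({toR a0, toR a1, toR a2} : Set (Fin 2 → ℝ))))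
    (hedge01 : ∀ z : Fin 2 → ℤ, toR z ∉ openSegment ℝ (toR a0) (toR a1))
    (hedge02 : ∀ z : Fin 2 → ℤ, toR z ∉ openSegment ℝ (toR a0) (toR a2))
    (hedge12 : ∀ z : Fin 2 → ℤ, toR z ∉ openSegment ℝ (toR a1) (toR a2)) :
    ∃ (M : Matrix (Fin 2) (Fin 2) ℤ) (v : Fin 2 → ℤ),
      (M.det = 1 ∨ M.det = -1) ∧
      (fun z => M.mulVec z + v) '' {a0, a1, a2} =
        ({![0, 0], ![1, 2], ![2, 1]} : Set (Fin 2 → ℤ)) ∧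
      ∀ b : Fin 2 → ℤ, toR b ∈ intrinsicInterior ℝ
          (convexHull ℝ ({toR a0, toR a1, toR a2} : Set (Fin 2 → ℝ))) →
        M.mulVec b + v = ![1, 1] := by
  classical
  set u : Fin 2 → ℤ := fun i => a1 i - a0 i with hu_def
  set w : Fin 2 → ℤ := fun i => a2 i - a0 i with hw_def
  -- determinant in terms of u, w
  have hdet_uw : det2 (a0 - a1) (a0 - a2) = u 0 * w 1 - u 1 * w 0 := by
    simp only [det2, Pi.sub_apply, hu_def, hw_def]; ring
  have h3 : u 0 * w 1 - u 1 * w 0 = 3 ∨ u 0 * w 1 - u 1 * w 0 = -3 := by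
    rw [← hdet_uw]
    rcases Int.natAbs_eq (det2 (a0 - a1) (a0 - a2)) with h | h <;>
      rw [hdet] at h <;> [left; right] <;> omega
  -- non-collinearity
  have hnc : ¬ Collinear ℝ ({toR a0, toR a1, toR a2} : Set (Fin 2 → ℝ)) := by
    intro hcol
    obtain ⟨vv, hv⟩ := (collinear_iff_of_mem (Set.mem_insert _ _)).1 hcol
    obtain ⟨r1, hr1⟩ := hv (toR a1) (by simp)
    obtain ⟨r2, hr2⟩ := hv (toR a2) (by simp)
    have h1 : ∀ i, (a0 i : ℝ) - a1 i = -(r1 * vv i) := by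
      intro i
      have := congrFun hr1 i
      simp [toR] at this
      linarith [this]
    have h2 : ∀ i, (a0 i : ℝ) - a2 i = -(r2 * vv i) := by
      intro i
      have := congrFun hr2 i
      simp [toR] at this
      linarith [this]
    have hd0 : ((det2 (a0 - a1) (a0 - a2) : ℤ) : ℝ) = 0 := by
      simp only [det2, Pi.sub_apply]
      push_cast
      rw [h1 0, h1 1, h2 0, h2 1]
      ring
    rw [show (det2 (a0 - a1) (a0 - a2) : ℤ) = 0 from by exact_mod_cast hd0] at hdet
    simp at hdet
  -- divisibility facts mod 3
  have hu3 := edge_not_dvd a0 a1 hedge01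
  have hw3 := edge_not_dvd a0 a2 hedge02
  have huw3 := edge_not_dvd a1 a2 hedge12
  have hcast : ∀ n : ℤ, ((n : ZMod 3) = 0) ↔ (3:ℤ) ∣ n := by
    intro n
    have := ZMod.intCast_zmod_eq_zero_iff_dvd n 3
    simpa using this
  have hkey : (3:ℤ) ∣ (u 0 + w 0) ∧ (3:ℤ) ∣ (u 1 + w 1) := by
    have hd : ((u 0 : ZMod 3)) * (w 1) - (u 1) * (w 0) = 0 := by
      have : ((u 0 * w 1 - u 1 * w 0 : ℤ) : ZMod 3) = 0 := by
        rcases h3 with h | h <;> rw [h] <;> decide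
      push_cast at this
      exact this
    have hx : ¬(((u 0 : ℤ) : ZMod 3) = 0 ∧ ((u 1 : ℤ) : ZMod 3) = 0) := by
      rw [hcast, hcast]; exact hu3
    have hy : ¬(((w 0 : ℤ) : ZMod 3) = 0 ∧ ((w 1 : ℤ) : ZMod 3) = 0) := by
      rw [hcast, hcast]; exact hw3
    have hxy : ¬(((u 0 : ℤ) : ZMod 3) = ((w 0 : ℤ) : ZMod 3) ∧
        ((u 1 : ℤ) : ZMod 3) = ((w 1 : ℤ) : ZMod 3)) := by
      rintro ⟨hA, hB⟩
      apply huw3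
      constructor
      · rw [← hcast]
        push_cast
        rw [show ((a2 0 : ZMod 3)) - (a1 0) = ((w 0 : ℤ) : ZMod 3) - ((u 0 : ℤ) : ZMod 3) from by
          push_cast [hu_def, hw_def]; ring, ← hA]
        ring
      · rw [← hcast]
        push_cast
        rw [show ((a2 1 : ZMod 3)) - (a1 1) = ((w 1 : ℤ) : ZMod 3) - ((u 1 : ℤ) : ZMod 3) from by
          push_cast [hu_def, hw_def]; ring, ← hB]
        ring
    obtain ⟨hA, hB⟩ := zmod3_classify _ _ _ _ hd hx hy hxy
    constructor
    · rw [← hcast]; push_cast; exact hA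
    · rw [← hcast]; push_cast; exact hB
  obtain ⟨p, hp⟩ := hkey.1
  obtain ⟨q, hq⟩ := hkey.2
  -- the centroid
  set c : Fin 2 → ℤ := fun i => a0 i + ![p, q] i with hc_def
  have hc : ∀ i, 3 * c i = a0 i + a1 i + a2 i := by
    intro i
    fin_cases i
    · have := hp
      simp [hc_def, hu_def, hw_def] at this ⊢
      omega
    · have := hq
      simp [hc_def, hu_def, hw_def] at this ⊢
      omega
  have hcint := centroid_intrinsic a0 a1 a2 c hnc hc
  have hbc : ∀ b : Fin 2 → ℤ, toR b ∈ intrinsicInterior ℝ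
      (convexHull ℝ ({toR a0, toR a1, toR a2} : Set (Fin 2 → ℝ))) → b = c := by
    intro b hb
    obtain ⟨b0, _, huniq⟩ := hint
    rw [huniq b hb, huniq c hcint]
  -- a1 and a2 as a0 plus u, w
  have ha1 : a1 = u + a0 := by funext i; simp [hu_def]
  have ha2 : a2 = w + a0 := by funext i; simp [hw_def]
  -- the matrix, by cases on the determinant sign
  obtain ⟨M, hMdet, hM1, hM2, hMpq⟩ :
      ∃ M : Matrix (Fin 2) (Fin 2) ℤ, (M.det = 1 ∨ M.det = -1) ∧
        ((M.mulVec u = ![1, -1] ∧ M.mulVec w = ![-1, -2]) ∨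
         (M.mulVec w = ![1, -1] ∧ M.mulVec u = ![-1, -2])) ∧
        True ∧ M.mulVec ![p, q] = ![0, -1] := by
    rcases h3 with h | h
    · obtain ⟨M, hd, h1, h2, h3⟩ := core u w p q h hp hq
      exact ⟨M, hd, Or.inl ⟨h1, h2⟩, trivial, h3⟩
    · obtain ⟨M, hd, h1, h2, h3⟩ := core w u p q (by linarith) (by linarith) (by linarith)
      exact ⟨M, hd, Or.inr ⟨h1, h2⟩, trivial, h3⟩
  set v : Fin 2 → ℤ := fun i => ![1, 2] i - M.mulVec a0 i with hv_def
  have hfa0 : M.mulVec a0 + v = ![1, 2] := by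
    funext i; simp [hv_def]
  have haddu : M.mulVec a1 = M.mulVec u + M.mulVec a0 := by
    conv_lhs => rw [ha1]
    rw [Matrix.mulVec_add]
  have haddw : M.mulVec a2 = M.mulVec w + M.mulVec a0 := by
    conv_lhs => rw [ha2]
    rw [Matrix.mulVec_add]
  have hfc : M.mulVec c + v = ![1, 1] := by
    have hcpq : c = ![p, q] + a0 := by
      funext i; fin_cases i <;> simp [hc_def] <;> ring
    rw [hcpq, Matrix.mulVec_add, hMpq]
    funext i
    fin_cases i <;> simp [hv_def, Matrix.vecHead, Matrix.vecTail] <;> ring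
  refine ⟨M, v, hMdet, ?_, fun b hb => by rw [hbc b hb]; exact hfc⟩
  rcases hM1 with ⟨h1, h2⟩ | ⟨h1, h2⟩
  · have hfa1 : M.mulVec a1 + v = ![2, 1] := by
      rw [haddu, h1]; funext i
      fin_cases i <;> simp [hv_def, Matrix.vecHead, Matrix.vecTail] <;> ring
    have hfa2 : M.mulVec a2 + v = ![0, 0] := by
      rw [haddw, h2]; funext i
      fin_cases i <;> simp [hv_def, Matrix.vecHead, Matrix.vecTail] <;> ring
    simp only [Set.image_insert_eq, Set.image_singleton]
    rw [hfa0, hfa1, hfa2]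
    rw [Set.pair_comm (![2, 1]) (![0, 0]), Set.insert_comm (![1, 2]) (![0, 0])]
  · have hfa1 : M.mulVec a1 + v = ![0, 0] := by
      rw [haddu, h2]; funext i
      fin_cases i <;> simp [hv_def, Matrix.vecHead, Matrix.vecTail] <;> ring
    have hfa2 : M.mulVec a2 + v = ![2, 1] := by
      rw [haddw, h1]; funext i
      fin_cases i <;> simp [hv_def, Matrix.vecHead, Matrix.vecTail] <;> ring
    simp only [Set.image_insert_eq, Set.image_singleton]
    rw [hfa0, hfa1, hfa2]
    rw [Set.insert_comm (![1, 2]) (![0, 0])]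
end
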